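/- arXiv:1705.06109 — 6 statements merged into one kernel-verified Lean document; each statement's English description precedes it below -/
import Mathlib

section
/- Let M be a smooth manifold, Ω ⊆ M an open subset, and φ ∈ C^∞(M) with φ ≥ 0 and φ = 0 on the topological boundary ∂Ω. Then for every complex number s with Re s > k, the function χ_Ω · φ^s (equal to φ(x)^s for x ∈ Ω and to 0 outside Ω) is of class C^k on M. -/
/-!
Write `F_s = χ_Ω φ^s`. At a point where `φ ≠ 0` the boundary hypothesis puts the point in the
interior of `Ω` or of its complement, so near it `F_s` is either `φ^s` with `φ > 0`, or `0`.
At a zero of `φ` we have `‖F_s‖ ≤ φ^(Re s)`, a function that vanishes there, is continuous for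
`Re s > 0`, and for `Re s > 1` is differentiable with derivative `0` there. Hence `F_s` is
continuous for `Re s > 0` and `dF_s = s F_{s-1} dφ` for `Re s > 1`, and induction on `k`,
trading `s` for `s - 1`, gives `F_s ∈ C^k` in every chart.
-/

open scoped Manifold Classical
open Set Filter Topology Asymptotics

theorem indicator_eventuallyEq_of_notMem_frontier {X β : Type*} [TopologicalSpace X] [Zero β]
    {W : Set X} {f : X → β} {y : X} (hy : y ∉ frontier W) :
    W.indicator f =ᶠ[𝓝 y] if y ∈ W then f else 0 := by
  rw [← mem_compl_iff, compl_frontier_eq_union_interior] at hy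
  rcases hy with hy | hy
  · filter_upwards [mem_interior_iff_mem_nhds.mp hy] with z hz
    rw [if_pos (interior_subset hy), indicator_of_mem hz]
  · filter_upwards [mem_interior_iff_mem_nhds.mp hy] with z hz
    rw [if_neg (interior_subset hy), indicator_of_notMem hz, Pi.zero_apply]

theorem hasFDerivAt_zero_of_norm_le {E F : Type*} [NormedAddCommGroup E] [NormedSpace ℝ E]
    [NormedAddCommGroup F] [NormedSpace ℝ F] {f : E → F} {h : E → ℝ} {y : E}
    (hfy : f y = 0) (hh : HasFDerivAt h (0 : E →L[ℝ] ℝ) y) (hhy : h y = 0)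
    (hfh : ∀ᶠ z in 𝓝 y, ‖f z‖ ≤ h z) : HasFDerivAt f (0 : E →L[ℝ] F) y := by
  have hf : f =O[𝓝 y] h := IsBigO.of_bound' (hfh.mono fun z hz => hz.trans (Real.le_norm_self _))
  have hh' : h =o[𝓝 y] fun z => z - y := by simpa [hhy] using hh.isLittleO
  exact .of_isLittleO (by simpa [hfy] using hf.trans_isLittleO hh')

section IndicatorCpow

variable {X : Type*} {W : Set X} {g : X → ℝ} {s : ℂ} {y : X}

theorem norm_indicator_ofReal_cpow_le (hs : 0 < s.re) {z : X} (hgz : 0 ≤ g z) :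
    ‖W.indicator (fun z => (g z : ℂ) ^ s) z‖ ≤ g z ^ s.re :=
  (norm_indicator_le_norm_self _ _).trans
    (Complex.norm_cpow_eq_rpow_re_of_nonneg hgz hs.ne').le

theorem indicator_ofReal_cpow_of_eq_zero (hs : 0 < s.re) (hgy : g y = 0) :
    W.indicator (fun z => (g z : ℂ) ^ s) y = 0 := by
  have hs0 : s ≠ 0 := fun h => hs.ne' (by simp [h])
  simp [hgy, Complex.zero_cpow hs0]

theorem continuousAt_indicator_ofReal_cpow [TopologicalSpace X] (hs : 0 < s.re)
    (hg : ContinuousAt g y) (hg0 : ∀ᶠ z in 𝓝 y, 0 ≤ g z) (hfr : y ∈ frontier W → g y = 0) :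
    ContinuousAt (W.indicator fun z => (g z : ℂ) ^ s) y := by
  by_cases hgy : g y = 0
  · have hbound : Tendsto (fun z => g z ^ s.re) (𝓝 y) (𝓝 0) := by
      simpa [Function.comp_def, hgy, Real.zero_rpow hs.ne'] using
        ((Real.continuousAt_rpow_const _ _ (Or.inr hs.le)).comp hg).tendsto
    rw [ContinuousAt, indicator_ofReal_cpow_of_eq_zero hs hgy]
    exact squeeze_zero_norm' (hg0.mono fun z => norm_indicator_ofReal_cpow_le hs) hbound
  · refine ContinuousAt.congr ?_ (indicator_eventuallyEq_of_notMem_frontier (mt hfr hgy)).symm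
    split_ifs
    · exact (Complex.continuous_ofReal_cpow_const hs).continuousAt.comp (f := g) hg
    · exact continuousAt_const

end IndicatorCpow

section NormedSpace

variable {E : Type*} [NormedAddCommGroup E] [NormedSpace ℝ E] {W : Set E} {g : E → ℝ} {s : ℂ}
  {y : E}

theorem hasFDerivAt_indicator_ofReal_cpow (hs : 1 < s.re) (hg : DifferentiableAt ℝ g y)
    (hg0 : ∀ᶠ z in 𝓝 y, 0 ≤ g z) (hfr : y ∈ frontier W → g y = 0) :
    HasFDerivAt (W.indicator fun z => (g z : ℂ) ^ s)
      ((fderiv ℝ g y).smulRight (s * W.indicator (fun z => (g z : ℂ) ^ (s - 1)) y)) y := by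
  have hs1 : 0 < (s - 1).re := by simpa using hs
  by_cases hgy : g y = 0
  · rw [indicator_ofReal_cpow_of_eq_zero hs1 hgy, mul_zero, ContinuousLinearMap.smulRight_zero]
    have hbound : HasFDerivAt (fun z => g z ^ s.re) (0 : E →L[ℝ] ℝ) y := by
      simpa [hgy, Real.zero_rpow (by linarith : s.re - 1 ≠ 0)] using
        hg.hasFDerivAt.rpow_const (p := s.re) (Or.inr hs.le)
    exact hasFDerivAt_zero_of_norm_le (indicator_ofReal_cpow_of_eq_zero (by linarith) hgy)
      hbound (by simp [hgy, Real.zero_rpow (by linarith : s.re ≠ 0)])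
      (hg0.mono fun z => norm_indicator_ofReal_cpow_le (by linarith))
  · refine HasFDerivAt.congr_of_eventuallyEq ?_
      (indicator_eventuallyEq_of_notMem_frontier (mt hfr hgy))
    rw [indicator_apply]
    split_ifs with hyW
    · have hpos : 0 < g y := lt_of_le_of_ne hg0.self_of_nhds (Ne.symm hgy)
      have hcpow : HasDerivAt (fun t : ℝ => (t : ℂ) ^ s) (s * (g y : ℂ) ^ (s - 1)) (g y) :=
        (Complex.hasStrictDerivAt_cpow_const
          (Complex.ofReal_mem_slitPlane.mpr hpos)).hasDerivAt.comp_ofReal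
      refine (hcpow.hasFDerivAt.comp y hg.hasFDerivAt).congr_fderiv ?_
      ext v
      simp [mul_comm]
    · rw [mul_zero, ContinuousLinearMap.smulRight_zero]
      exact hasFDerivAt_const (0 : ℂ) y

theorem contDiffAt_indicator_ofReal_cpow {U : Set E} {k : ℕ} (hU : IsOpen U)
    (hg : ContDiffOn ℝ k g U) (hg0 : ∀ y ∈ U, 0 ≤ g y) (hfr : ∀ y ∈ U, y ∈ frontier W → g y = 0)
    (hs : k < s.re) (hy : y ∈ U) :
    ContDiffAt ℝ k (W.indicator fun z => (g z : ℂ) ^ s) y := by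
  have hg0_nhds : ∀ z ∈ U, ∀ᶠ w in 𝓝 z, 0 ≤ g w := fun z hz =>
    eventually_of_mem (hU.mem_nhds hz) hg0
  induction k generalizing s y with
  | zero =>
    refine contDiffAt_zero.mpr ⟨U, hU.mem_nhds hy, fun z hz => ?_⟩
    exact (continuousAt_indicator_ofReal_cpow (by simpa using hs)
      (hg.continuousOn.continuousAt (hU.mem_nhds hz)) (hg0_nhds z hz) (hfr z hz)).continuousWithinAt
  | succ k ih =>
    push_cast at hg hs ⊢
    have hdiff : ∀ z ∈ U, DifferentiableAt ℝ g z := fun z hz =>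
      (hg.contDiffAt (hU.mem_nhds hz)).differentiableAt (by simp)
    refine contDiffAt_succ_iff_hasFDerivAt.mpr ⟨_, ⟨U, hU.mem_nhds hy, fun z hz =>
      hasFDerivAt_indicator_ofReal_cpow (by linarith [k.cast_nonneg (α := ℝ)]) (hdiff z hz)
        (hg0_nhds z hz) (hfr z hz)⟩, ?_⟩
    have hsub : (k : ℝ) < (s - 1).re := by rw [Complex.sub_re, Complex.one_re]; linarith
    exact ((hg.contDiffAt (hU.mem_nhds hy)).fderiv_right le_rfl).smulRight
      (contDiffAt_const.mul (ih (hg.of_le (by simp)) hsub hy))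

end NormedSpace

theorem contMDiffAt_iff_contDiffAt_comp_chartAt_symm {𝕜 E F M : Type*}
    [NontriviallyNormedField 𝕜] [NormedAddCommGroup E] [NormedSpace 𝕜 E] [NormedAddCommGroup F]
    [NormedSpace 𝕜 F] [TopologicalSpace M] [ChartedSpace E M] {n : WithTop ℕ∞} {f : M → F}
    {x : M} :
    ContMDiffAt 𝓘(𝕜, E) 𝓘(𝕜, F) n f x ↔
      ContDiffAt 𝕜 n (f ∘ (chartAt E x).symm) (chartAt E x x) := by
  rw [contMDiffAt_iff_source, ← contDiffWithinAt_univ, ← contMDiffWithinAt_iff_contDiffWithinAt]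
  simp

theorem stmt1_general {E : Type*} [NormedAddCommGroup E] [NormedSpace ℝ E]
    {M : Type*} [TopologicalSpace M] [ChartedSpace E M]
    [IsManifold (modelWithCornersSelf ℝ E) (⊤ : ℕ∞) M]
    (Ω : Set M) (φ : M → ℝ)
    (hφ : ContMDiff (modelWithCornersSelf ℝ E) (modelWithCornersSelf ℝ ℝ) (⊤ : ℕ∞) φ)
    (hφ0 : ∀ x, 0 ≤ φ x) (hbd : ∀ x ∈ frontier Ω, φ x = 0)
    (k : ℕ) (s : ℂ) (hs : (k : ℝ) < s.re) :
    ContMDiff (modelWithCornersSelf ℝ E) (modelWithCornersSelf ℝ ℂ) k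
      (fun x => if x ∈ Ω then (φ x : ℂ) ^ s else 0) := by
  intro x
  rw [contMDiffAt_iff_contDiffAt_comp_chartAt_symm]
  set e := chartAt E x
  have hφe : ContDiffOn ℝ k (φ ∘ e.symm) e.target :=
    ((hφ.of_le (by exact_mod_cast le_top)).comp_contMDiffOn contMDiffOn_chart_symm).contDiffOn
  have hbde : ∀ y ∈ e.target, y ∈ frontier (e.symm ⁻¹' Ω) → φ (e.symm y) = 0 :=
    fun y hy hyΩ => hbd _ ((e.symm.preimage_frontier Ω).symm.subset ⟨hy, hyΩ⟩).2
  exact contDiffAt_indicator_ofReal_cpow e.open_target hφe (fun y _ => hφ0 _) hbde hs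
    (e.map_source (mem_chart_source E x))

/-- Let `M` be a smooth manifold (modelled on a real normed space `E`), `Ω ⊆ M` open and
`φ ∈ C^∞(M)` with `φ ≥ 0` and `φ = 0` on the topological boundary `∂Ω`.  Then for every
complex number `s` with `Re s > k`, the function `χ_Ω · φ^s` (equal to `φ(x)^s` on `Ω`
and to `0` outside `Ω`) is of class `C^k` on `M`. -/
theorem stmt1 {E : Type*} [NormedAddCommGroup E] [NormedSpace ℝ E]
    {M : Type*} [TopologicalSpace M] [ChartedSpace E M]
    [IsManifold (modelWithCornersSelf ℝ E) (⊤ : ℕ∞) M]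
    (Ω : Set M) (hΩ : IsOpen Ω) (φ : M → ℝ)
    (hφ : ContMDiff (modelWithCornersSelf ℝ E) (modelWithCornersSelf ℝ ℝ) (⊤ : ℕ∞) φ)
    (hφ0 : ∀ x, 0 ≤ φ x) (hbd : ∀ x ∈ frontier Ω, φ x = 0)
    (k : ℕ) (s : ℂ) (hs : (k : ℝ) < s.re) :
    ContMDiff (modelWithCornersSelf ℝ E) (modelWithCornersSelf ℝ ℂ) k
      (fun x => if x ∈ Ω then (φ x : ℂ) ^ s else 0) :=
  stmt1_general Ω φ hφ hφ0 hbd k s hs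
end

section
/- Let Σ be a root system in a Euclidean vector space with a fixed positive system Σ⁺ and Weyl group W, and let w ∈ W. For any root α ∈ Σ⁺ ∩ wΣ⁺ there exists a finite sequence α = α₁, α₂, …, α_r of roots in Σ⁺ ∩ wΣ⁺ such that ⟨αᵢ, αᵢ₊₁⟩ ≠ 0 for i = 1, …, r−1 and α_r is a simple root of Σ⁺. -/
open scoped RealInnerProductSpace

variable {E : Type*} [NormedAddCommGroup E] [InnerProductSpace ℝ E] [FiniteDimensional ℝ E]

/-- A (possibly non-reduced) root system in a Euclidean space: a finite set of nonzero
vectors, stable under the orthogonal reflections in its elements, with integral Cartan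
numbers. -/
structure IsRootSystem (S : Set E) : Prop where
  finite : S.Finite
  ne_zero : ∀ α ∈ S, α ≠ 0
  reflect_mem : ∀ α ∈ S, ∀ β ∈ S, Submodule.reflection (ℝ ∙ α)ᗮ β ∈ S
  integral : ∀ α ∈ S, ∀ β ∈ S, ∃ n : ℤ, 2 * ⟪β, α⟫ / ⟪α, α⟫ = (n : ℝ)

/-- A positive system `P` for the root system `S`. -/
structure IsPositiveSystem (S P : Set E) : Prop where
  subset : P ⊆ S
  mem_or : ∀ α ∈ S, α ∈ P ∨ -α ∈ P
  not_both : ∀ α ∈ P, -α ∉ P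
  add_mem : ∀ α ∈ P, ∀ β ∈ P, α + β ∈ S → α + β ∈ P

/-- A simple root of the positive system `P`: a positive root which is not the sum of two
positive roots. -/
def IsSimpleRoot (P : Set E) (α : E) : Prop :=
  α ∈ P ∧ ¬∃ β ∈ P, ∃ γ ∈ P, α = β + γ

/-- The Weyl group of `S`: the subgroup of the orthogonal group generated by the
reflections in the roots. -/
noncomputable def weylGroup (S : Set E) : Subgroup (E ≃ₗᵢ[ℝ] E) :=
  Subgroup.closure {g | ∃ α ∈ S, g = Submodule.reflection (ℝ ∙ α)ᗮ}

/-!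
Let `Q = Σ⁺ ∩ wΣ⁺`. Since `w` permutes `Σ`, `wΣ⁺` is again a positive system, so `Q` is closed
under those sums that are roots. If `a ∈ Q` is not simple, write `a = β + γ` with `β, γ ∈ Σ⁺`; one
of them, say `b`, lies in `wΣ⁺`, for otherwise `-a = -β - γ ∈ wΣ⁺`. If `⟪a, b⟫ ≠ 0` we step from
`a` to `b`. If `⟪a, b⟫ = 0`, then `⟪b, a - b⟫ = -⟪b, b⟫`, so reflecting `a - b` in `b` gives the
root `a + b ∈ Q`, and `a, a + b, b` is a chain. Either way `a - b ∈ Σ⁺`, and such descents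
terminate because no nonempty sum of positive roots vanishes.
-/

theorem IsPositiveSystem.image {V F : Type*} [NormedAddCommGroup V] [EquivLike F V V]
    [AddEquivClass F V V] {S P : Set V} (hP : IsPositiveSystem S P) (g : F) (hg : g '' S = S) :
    IsPositiveSystem S (g '' P) where
  subset := hg ▸ Set.image_mono hP.subset
  mem_or α hα := by
    rw [← hg] at hα
    obtain ⟨α, hα, rfl⟩ := hα
    refine (hP.mem_or α hα).imp (Set.mem_image_of_mem g) fun h => ?_
    simpa using Set.mem_image_of_mem g h
  not_both := by
    rintro _ ⟨α, hα, rfl⟩ ⟨β, hβ, hβα⟩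
    rw [← map_neg, EquivLike.injective g |>.eq_iff] at hβα
    exact hP.not_both α hα (hβα ▸ hβ)
  add_mem := by
    rintro _ ⟨α, hα, rfl⟩ _ ⟨β, hβ, rfl⟩ h
    rw [← map_add, ← hg, (EquivLike.injective g).mem_set_image] at h
    rw [← map_add, (EquivLike.injective g).mem_set_image]
    exact hP.add_mem α hα β hβ h

section InnerProductSpace

variable {V : Type*} [NormedAddCommGroup V] [InnerProductSpace ℝ V] {S P P' : Set V}

theorem Submodule.reflection_orthogonal_singleton_apply (α β : V) :
    (ℝ ∙ α)ᗮ.reflection β = β - (2 * ⟪α, β⟫ / ⟪α, α⟫) • α := by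
  rw [Submodule.reflection_orthogonal_apply, Submodule.reflection_singleton_apply,
    real_inner_self_eq_norm_sq]
  module

namespace IsRootSystem

theorem neg_mem (hS : IsRootSystem S) {α : V} (hα : α ∈ S) : -α ∈ S := by
  simpa [Submodule.reflection_orthogonalComplement_singleton_eq_neg] using
    hS.reflect_mem α hα α hα

theorem add_mem_of_cartan_eq_neg_one (hS : IsRootSystem S) {α β : V} (hα : α ∈ S) (hβ : β ∈ S)
    (h : 2 * ⟪α, β⟫ / ⟪α, α⟫ = -1) : α + β ∈ S := by
  have := hS.reflect_mem α hα β hβ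
  rw [Submodule.reflection_orthogonal_singleton_apply, h] at this
  convert this using 1
  module

/-- The two Cartan integers of `α` and `β` are negative with product `4 cos² ∠(α, β) ≤ 4`, so one
of them is `-1` unless both are `-2`, which forces `β = -α`. -/
theorem add_mem_of_inner_neg (hS : IsRootSystem S) {α β : V} (hα : α ∈ S) (hβ : β ∈ S)
    (hneg : ⟪α, β⟫ < 0) (hne : α + β ≠ 0) : α + β ∈ S := by
  have hαα : 0 < ⟪α, α⟫ := real_inner_self_pos.mpr (hS.ne_zero α hα)
  have hββ : 0 < ⟪β, β⟫ := real_inner_self_pos.mpr (hS.ne_zero β hβ)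
  obtain ⟨m, hm⟩ := hS.integral α hα β hβ
  obtain ⟨k, hk⟩ := hS.integral β hβ α hα
  rw [real_inner_comm] at hm
  have hm_neg : m < 0 := by exact_mod_cast hm ▸ div_neg_of_neg_of_pos (by linarith) hαα
  have hk_neg : k < 0 := by exact_mod_cast hk ▸ div_neg_of_neg_of_pos (by linarith) hββ
  have hmk : m * k ≤ 4 := by
    have : (m : ℝ) * k ≤ 4 := by
      rw [← hm, ← hk, div_mul_div_comm, div_le_iff₀ (by positivity)]
      nlinarith [real_inner_mul_inner_self_le α β]
    exact_mod_cast this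
  obtain rfl | rfl | ⟨rfl, rfl⟩ : m = -1 ∨ k = -1 ∨ (m = -2 ∧ k = -2) := by
    by_contra! h
    obtain ⟨hm1, hk1, hmk2⟩ := h
    have : -4 ≤ m + k := by nlinarith [show m ≤ -2 by omega, show k ≤ -2 by omega]
    exact hmk2 (by omega) (by omega)
  · exact hS.add_mem_of_cartan_eq_neg_one hα hβ (by exact_mod_cast hm)
  · rw [add_comm]
    exact hS.add_mem_of_cartan_eq_neg_one hβ hα (by rw [real_inner_comm]; exact_mod_cast hk)
  · refine absurd ((inner_self_eq_zero (𝕜 := ℝ)).mp ?_) hne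
    rw [div_eq_iff hαα.ne'] at hm
    rw [div_eq_iff hββ.ne'] at hk
    rw [inner_add_add_self, real_inner_comm α β]
    push_cast at hm hk
    linarith

theorem image_eq_of_mem_weylGroup (hS : IsRootSystem S) {w : V ≃ₗᵢ[ℝ] V}
    (hw : w ∈ weylGroup S) : w '' S = S := by
  have hmaps : Set.MapsTo w S S := by
    induction hw using Subgroup.closure_induction'' with
    | mem g hg =>
      obtain ⟨α, hα, rfl⟩ := hg
      exact hS.reflect_mem α hα
    | inv_mem g hg =>
      obtain ⟨α, hα, rfl⟩ := hg
      rw [Submodule.reflection_inv]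
      exact hS.reflect_mem α hα
    | one => exact Set.mapsTo_id S
    | mul g h _ _ hg hh => exact hg.comp hh
  exact ((hS.finite.injOn_iff_bijOn_of_mapsTo hmaps).mp w.injective.injOn).image_eq

end IsRootSystem

namespace IsPositiveSystem

theorem mem_or_mem_of_add_mem (hS : IsRootSystem S) (hP : IsPositiveSystem S P) {α β : V}
    (hα : α ∈ S) (hβ : β ∈ S) (hαβ : α + β ∈ P) : α ∈ P ∨ β ∈ P := by
  by_contra! h
  have hα' := (hP.mem_or α hα).resolve_left h.1
  have hβ' := (hP.mem_or β hβ).resolve_left h.2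
  have hneg : -(α + β) ∈ S := hS.neg_mem (hP.subset hαβ)
  rw [neg_add] at hneg
  exact hP.not_both _ hαβ (neg_add α β ▸ hP.add_mem _ hα' _ hβ' hneg)

/-- If `x + t.sum = 0`, then `x` pairs negatively with some `y ∈ t`; merging `x` and `y` into the
positive root `x + y` gives a shorter vanishing sum. -/
theorem multiset_sum_ne_zero (hS : IsRootSystem S) (hP : IsPositiveSystem S P) {m : Multiset V}
    (hm : ∀ x ∈ m, x ∈ P) (h0 : m ≠ 0) : m.sum ≠ 0 := by
  classical
  intro hsum
  obtain ⟨x, hx⟩ := Multiset.exists_mem_of_ne_zero h0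
  obtain ⟨t, rfl⟩ := Multiset.exists_cons_of_mem hx
  replace hx : x ∈ P := hm x hx
  have hxS := hP.subset hx
  obtain ⟨y, hyt, hxy⟩ : ∃ y ∈ t, ⟪x, y⟫ < 0 := by
    by_contra! h
    have hxx : 0 < ⟪x, x⟫ := real_inner_self_pos.mpr (hS.ne_zero x hxS)
    have ht : 0 ≤ ⟪x, t.sum⟫ := by
      rw [show ⟪x, t.sum⟫ = (t.map (⟪x, ·⟫)).sum from map_multiset_sum (innerₛₗ ℝ x) t]
      exact Multiset.sum_nonneg fun z hz => by
        obtain ⟨y, hy, rfl⟩ := Multiset.mem_map.mp hz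
        exact h y hy
    rw [Multiset.sum_cons] at hsum
    rw [eq_neg_of_add_eq_zero_right hsum, inner_neg_right] at ht
    linarith
  have hy : y ∈ P := hm y (Multiset.mem_cons_of_mem hyt)
  have hxyP : x + y ∈ P := by
    refine hP.add_mem x hx y hy (hS.add_mem_of_inner_neg hxS (hP.subset hy) hxy fun h => ?_)
    exact hP.not_both x hx (eq_neg_of_add_eq_zero_right h ▸ hy)
  refine multiset_sum_ne_zero hS hP (m := (x + y) ::ₘ t.erase y) ?_ Multiset.cons_ne_zero ?_
  · intro z hz
    rcases Multiset.mem_cons.mp hz with rfl | hz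
    · exact hxyP
    · exact hm z (Multiset.mem_cons_of_mem (Multiset.mem_of_mem_erase hz))
  · rw [Multiset.sum_cons, add_assoc, Multiset.sum_erase hyt, ← Multiset.sum_cons, hsum]
termination_by Multiset.card m
decreasing_by
  classical
  subst_vars
  simpa only [Multiset.card_cons, add_lt_add_iff_right] using Multiset.card_erase_lt_of_mem hyt

theorem eq_zero_of_mem_closure_of_neg_mem_closure (hS : IsRootSystem S)
    (hP : IsPositiveSystem S P) {x : V} (hx : x ∈ AddSubmonoid.closure P)
    (hx' : -x ∈ AddSubmonoid.closure P) : x = 0 := by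
  obtain ⟨m, hm, rfl⟩ := AddSubmonoid.exists_multiset_of_mem_closure hx
  obtain ⟨m', hm', hm'_sum⟩ := AddSubmonoid.exists_multiset_of_mem_closure hx'
  by_contra h0
  refine hP.multiset_sum_ne_zero hS (m := m + m') ?_ ?_ ?_
  · intro y hy
    exact (Multiset.mem_add.mp hy).elim (hm y) (hm' y)
  · exact fun h => h0 (by simp [(add_eq_zero.mp h).1])
  · rw [Multiset.sum_add, hm'_sum, add_neg_cancel]

theorem wellFoundedOn (hS : IsRootSystem S) (hP : IsPositiveSystem S P) :
    P.WellFoundedOn fun b a => a - b ∈ AddSubmonoid.closure P ∧ b ≠ a := by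
  have : IsStrictOrder V fun b a => a - b ∈ AddSubmonoid.closure P ∧ b ≠ a :=
    { irrefl a h := h.2 rfl
      trans c b a hcb hba := by
        refine ⟨by simpa using AddSubmonoid.add_mem _ hba.1 hcb.1, fun hca => hcb.2 ?_⟩
        subst hca
        refine (sub_eq_zero.mp (hP.eq_zero_of_mem_closure_of_neg_mem_closure hS hcb.1 ?_)).symm
        simpa using hba.1 }
  exact (hS.finite.subset hP.subset).wellFoundedOn

end IsPositiveSystem

def nonOrthogonal (s : Set V) : SetRel s s := {x | ⟪(x.1 : V), x.2⟫ ≠ 0}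

theorem mem_nonOrthogonal {s : Set V} {x y : s} :
    (x, y) ∈ nonOrthogonal s ↔ ⟪(x : V), y⟫ ≠ 0 :=
  Iff.rfl

namespace IsPositiveSystem

theorem exists_mem_inter_sub_mem_of_not_isSimpleRoot (hS : IsRootSystem S)
    (hP : IsPositiveSystem S P) (hP' : IsPositiveSystem S P') {a : V} (ha : a ∈ P ∩ P')
    (hna : ¬IsSimpleRoot P a) : ∃ b ∈ P ∩ P', a - b ∈ P := by
  obtain ⟨β, hβ, γ, hγ, rfl⟩ : ∃ β ∈ P, ∃ γ ∈ P, a = β + γ := not_and_not_right.mp hna ha.1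
  rcases hP'.mem_or_mem_of_add_mem hS (hP.subset hβ) (hP.subset hγ) ha.2 with h | h
  · exact ⟨β, ⟨hβ, h⟩, by simpa using hγ⟩
  · exact ⟨γ, ⟨hγ, h⟩, by simpa using hβ⟩

theorem exists_relSeries_of_sub_mem (hS : IsRootSystem S) (hP : IsPositiveSystem S P)
    (hP' : IsPositiveSystem S P') {a b : V} (ha : a ∈ P ∩ P') (hb : b ∈ P ∩ P')
    (hab : a - b ∈ P) :
    ∃ p : RelSeries (nonOrthogonal (P ∩ P')), p.head = ⟨a, ha⟩ ∧ p.last = ⟨b, hb⟩ := by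
  by_cases h : ⟪a, b⟫ = 0
  · have hbb : ⟪b, b⟫ ≠ 0 := (real_inner_self_pos.mpr (hS.ne_zero b (hP.subset hb.1))).ne'
    have habS : a + b ∈ S := by
      have := hS.reflect_mem b (hP.subset hb.1) _ (hP.subset hab)
      rw [Submodule.reflection_orthogonal_singleton_apply, inner_sub_right, real_inner_comm,
        h, zero_sub, mul_neg, neg_div, mul_div_assoc, div_self hbb] at this
      convert this using 1
      module
    have habQ : a + b ∈ P ∩ P' :=
      ⟨hP.add_mem a ha.1 b hb.1 habS, hP'.add_mem a ha.2 b hb.2 habS⟩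
    have h₁ : ⟪a, a + b⟫ ≠ 0 := by
      rw [inner_add_right, h, add_zero]
      exact (real_inner_self_pos.mpr (hS.ne_zero a (hP.subset ha.1))).ne'
    have h₂ : ⟪a + b, b⟫ ≠ 0 := by
      rwa [inner_add_left, h, zero_add]
    let q := (RelSeries.singleton (nonOrthogonal (P ∩ P')) ⟨b, hb⟩).cons ⟨a + b, habQ⟩
      (mem_nonOrthogonal.mpr h₂)
    exact ⟨q.cons ⟨a, ha⟩ (mem_nonOrthogonal.mpr h₁), rfl, by simp [q]⟩
  · let q := RelSeries.singleton (nonOrthogonal (P ∩ P')) ⟨b, hb⟩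
    exact ⟨q.cons ⟨a, ha⟩ (mem_nonOrthogonal.mpr h), rfl, by simp [q]⟩

theorem exists_relSeries_isSimpleRoot (hS : IsRootSystem S) (hP : IsPositiveSystem S P)
    (hP' : IsPositiveSystem S P') (a : ↥(P ∩ P')) :
    ∃ p : RelSeries (nonOrthogonal (P ∩ P')), p.head = a ∧ IsSimpleRoot P p.last := by
  obtain ⟨a, ha⟩ := a
  refine (hP.wellFoundedOn hS).induction ha.1
    (P := fun a => ∀ ha : a ∈ P ∩ P', ∃ p : RelSeries (nonOrthogonal (P ∩ P')),
      p.head = ⟨a, ha⟩ ∧ IsSimpleRoot P p.last) ?_ ha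
  intro a _ ih ha
  by_cases hsimple : IsSimpleRoot P a
  · exact ⟨RelSeries.singleton _ ⟨a, ha⟩, rfl, hsimple⟩
  obtain ⟨b, hb, hab⟩ := hP.exists_mem_inter_sub_mem_of_not_isSimpleRoot hS hP' ha hsimple
  obtain ⟨p, hp_head, hp_last⟩ := hP.exists_relSeries_of_sub_mem hS hP' ha hb hab
  have hba : b ≠ a := fun h => hS.ne_zero _ (hP.subset hab) (by rw [h, sub_self])
  obtain ⟨q, hq_head, hq_last⟩ := ih b hb.1 ⟨AddSubmonoid.subset_closure hab, hba⟩ hb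
  exact ⟨p.smash q (hp_last.trans hq_head.symm), by rw [RelSeries.head_smash, hp_head],
    by rwa [RelSeries.last_smash]⟩

end IsPositiveSystem

end InnerProductSpace

/-- For any `w` in the Weyl group and any root `α ∈ Σ⁺ ∩ wΣ⁺` there is a finite chain
`α = α₁, …, α_r` of roots in `Σ⁺ ∩ wΣ⁺` with `⟪αᵢ, αᵢ₊₁⟫ ≠ 0` and `α_r` simple. -/
theorem stmt2 (S : Set E) (hS : IsRootSystem S) (P : Set E) (hP : IsPositiveSystem S P)
    (w : E ≃ₗᵢ[ℝ] E) (hw : w ∈ weylGroup S)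
    (α : E) (hα : α ∈ P ∩ (w '' P)) :
    ∃ (r : ℕ) (a : Fin (r + 1) → E), a 0 = α ∧
      (∀ i, a i ∈ P ∩ (w '' P)) ∧
      (∀ i : Fin r, ⟪a i.castSucc, a i.succ⟫ ≠ 0) ∧
      IsSimpleRoot P (a (Fin.last r)) := by
  have hP' : IsPositiveSystem S (w '' P) := hP.image w (hS.image_eq_of_mem_weylGroup hw)
  obtain ⟨p, hp_head, hp_last⟩ := hP.exists_relSeries_isSimpleRoot hS hP' ⟨α, hα⟩
  exact ⟨p.length, fun i => p i, congrArg Subtype.val hp_head, fun i => (p i).2,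
    fun i => mem_nonOrthogonal.mp (p.step i), hp_last⟩
end

section
/- Let 𝔤 be a real semisimple Lie algebra with restricted root system Σ(𝔤,𝔞) relative to a maximal abelian subspace 𝔞 of 𝔭 (in a Cartan decomposition 𝔤 = 𝔨 ⊕ 𝔭). If α₁, α₂ ∈ Σ(𝔤,𝔞) satisfy (α₁, α₂) < 0 with respect to the invariant inner product, then for any nonzero X₁ in the root space 𝔤(𝔞;α₁) and any nonzero X₂ in 𝔤(𝔞;α₂), the bracket [X₁, X₂] is nonzero. -/
/-!
The Cartan involution `θ` maps `𝔤(𝔞;α₁)` onto `𝔤(𝔞;-α₁)`, and `[X₁, θX₁]` lies in `𝔞`; by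
invariance of the Killing form and its positivity on `𝔞` it equals `B(X₁, θX₁) • H₁`, a negative
multiple of the Killing dual of `α₁`. Rescaling `H₁` and `θX₁` gives an `sl₂`-triple with `e = X₁`
whose `h` acts on `X₂` by a positive multiple of `α₂(H₁) = (α₁, α₂) < 0`. If `[X₁, X₂] = 0`, then `X₂`
would be a primitive vector of negative weight, impossible in a finite-dimensional representation.
-/

namespace IsSl2Triple

variable {K L M : Type*} [Field K] [LieRing L] [LieAlgebra K L]
  [AddCommGroup M] [Module K M] [LieRingModule L M] [LieModule K L M]

theorem of_lie_eq_smul [CharZero K] {H X Y : L} {c d : K} (hHX : ⁅H, X⁆ = d • X)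
    (hHY : ⁅H, Y⁆ = -d • Y) (hXY : ⁅X, Y⁆ = c • H) (hH : H ≠ 0) (hc : c ≠ 0) (hd : d ≠ 0) :
    IsSl2Triple ((2 / d) • H) X ((2 / (c * d)) • Y) where
  h_ne_zero := smul_ne_zero (div_ne_zero two_ne_zero hd) hH
  lie_e_f := by
    rw [lie_smul, hXY, smul_smul]
    congr 1
    field_simp
  lie_h_e_nsmul := by
    rw [smul_lie, hHX, smul_smul, div_mul_cancel₀ _ hd, ofNat_smul_eq_nsmul]
  lie_h_f_nsmul := by
    rw [smul_lie, lie_smul, hHY, smul_smul, smul_smul, ← ofNat_smul_eq_nsmul (R := K), smul_smul,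
      ← neg_smul]
    congr 1
    field_simp

theorem lie_e_ne_zero_of_lie_h_eq_smul_of_neg [LinearOrder K] [IsStrictOrderedRing K]
    [Module.Finite K M] {h e f : L} (t : IsSl2Triple h e f) {m : M} {μ : K} (hm : m ≠ 0)
    (hhm : ⁅h, m⁆ = μ • m) (hμ : μ < 0) : ⁅e, m⁆ ≠ 0 := by
  intro hem
  obtain ⟨n, rfl⟩ := (HasPrimitiveVectorWith.mk (t := t) hm hhm hem).exists_nat
  exact hμ.not_ge n.cast_nonneg

end IsSl2Triple

section RootVector

variable {R g : Type*} [CommRing R] [LieRing g] [LieAlgebra R g]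

def IsRootVector (a : LieSubalgebra R g) (α : Module.Dual R a) (X : g) : Prop :=
  ∀ H : a, ⁅(H : g), X⁆ = α H • X

variable {a : LieSubalgebra R g} {α : Module.Dual R a} {X : g}

theorem IsRootVector.map_involution {θ : g ≃ₗ⁅R⁆ g} (hθinv : ∀ X, θ (θ X) = X)
    (haθ : ∀ H ∈ a, θ H = -H) (hX : IsRootVector a α X) : IsRootVector a (-α) (θ X) := by
  intro H
  calc ⁅(H : g), θ X⁆ = θ ⁅θ H, X⁆ := by rw [LieEquiv.map_lie, hθinv]
    _ = (-α) H • θ X := by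
      rw [haθ H H.2, neg_lie, hX H, map_neg, map_smul, LinearMap.neg_apply, neg_smul]

theorem IsRootVector.lie_map_mem {θ : g ≃ₗ⁅R⁆ g} (hθinv : ∀ X, θ (θ X) = X)
    (haθ : ∀ H ∈ a, θ H = -H) (hmax : ∀ X : g, θ X = -X → (∀ H ∈ a, ⁅H, X⁆ = (0 : g)) → X ∈ a)
    (hX : IsRootVector a α X) : ⁅X, θ X⁆ ∈ a := by
  refine hmax _ (by rw [LieEquiv.map_lie, hθinv, ← lie_skew]) fun H hH ↦ ?_
  have hθX := hX.map_involution hθinv haθ ⟨H, hH⟩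
  rw [leibniz_lie, hX ⟨H, hH⟩, hθX, smul_lie, lie_smul, LinearMap.neg_apply, neg_smul,
    add_neg_cancel]

theorem killingForm_lie_of_isRootVector_neg {Y : g} (hY : IsRootVector a (-α) Y) (H : a) :
    killingForm R g ⁅X, Y⁆ H = α H * killingForm R g X Y := by
  rw [killingForm, LieModule.traceForm_apply_lie_apply, ← lie_skew, hY H, LinearMap.neg_apply,
    neg_smul, neg_neg, map_smul, smul_eq_mul]

end RootVector

section CartanInvolution

variable {g : Type*} [LieRing g] [LieAlgebra ℝ g] {θ : g ≃ₗ⁅ℝ⁆ g} {a : LieSubalgebra ℝ g}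

theorem killingForm_self_pos_of_mem (hθpos : ∀ X : g, X ≠ 0 → 0 < -(killingForm ℝ g X (θ X)))
    (haθ : ∀ H ∈ a, θ H = -H) {H : g} (hH : H ∈ a) (hH0 : H ≠ 0) :
    0 < killingForm ℝ g H H := by
  simpa [haθ H hH] using hθpos H hH0

theorem eq_of_forall_killingForm_eq (hθpos : ∀ X : g, X ≠ 0 → 0 < -(killingForm ℝ g X (θ X)))
    (haθ : ∀ H ∈ a, θ H = -H) {Z W : g} (hZ : Z ∈ a) (hW : W ∈ a)
    (h : ∀ H : a, killingForm ℝ g Z H = killingForm ℝ g W H) : Z = W := by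
  by_contra hne
  have hpos := killingForm_self_pos_of_mem hθpos haθ (a.sub_mem hZ hW) (sub_ne_zero.2 hne)
  exact hpos.ne' (by simpa [LinearMap.map_sub₂, sub_eq_zero] using h ⟨Z - W, a.sub_mem hZ hW⟩)

theorem IsRootVector.lie_map_eq_smul (hθinv : ∀ X, θ (θ X) = X)
    (hθpos : ∀ X : g, X ≠ 0 → 0 < -(killingForm ℝ g X (θ X))) (haθ : ∀ H ∈ a, θ H = -H)
    (hmax : ∀ X : g, θ X = -X → (∀ H ∈ a, ⁅H, X⁆ = (0 : g)) → X ∈ a)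
    {α : Module.Dual ℝ a} {X : g} (hX : IsRootVector a α X) {Hα : a}
    (hHα : ∀ H : a, killingForm ℝ g Hα H = α H) :
    ⁅X, θ X⁆ = killingForm ℝ g X (θ X) • (Hα : g) := by
  refine eq_of_forall_killingForm_eq hθpos haθ (hX.lie_map_mem hθinv haθ hmax)
    (a.smul_mem _ Hα.2) fun H ↦ ?_
  rw [killingForm_lie_of_isRootVector_neg (hX.map_involution hθinv haθ), map_smul,
    LinearMap.smul_apply, hHα, smul_eq_mul, mul_comm]

end CartanInvolution

theorem stmt4_general {g : Type*} [LieRing g] [LieAlgebra ℝ g] [Module.Finite ℝ g]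
    (θ : g ≃ₗ⁅ℝ⁆ g) (hθinv : ∀ X, θ (θ X) = X)
    (hθpos : ∀ X : g, X ≠ 0 → 0 < -(killingForm ℝ g X (θ X)))
    (a : LieSubalgebra ℝ g)
    (haθ : ∀ X ∈ a, θ X = -X)
    (hmax : ∀ X : g, θ X = -X → (∀ H ∈ a, ⁅H, X⁆ = (0 : g)) → X ∈ a)
    (α₁ α₂ : Module.Dual ℝ a)
    (H₁ H₂ : a)
    (hH₁ : ∀ H : a, killingForm ℝ g (H₁ : g) (H : g) = α₁ H)
    (hH₂ : ∀ H : a, killingForm ℝ g (H₂ : g) (H : g) = α₂ H)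
    (hneg : killingForm ℝ g (H₁ : g) (H₂ : g) < 0)
    (X₁ X₂ : g) (hX₁0 : X₁ ≠ 0) (hX₂0 : X₂ ≠ 0)
    (hX₁ : ∀ H : a, ⁅(H : g), X₁⁆ = α₁ H • X₁)
    (hX₂ : ∀ H : a, ⁅(H : g), X₂⁆ = α₂ H • X₂) :
    ⁅X₁, X₂⁆ ≠ 0 := by
  have hH₁0 : (H₁ : g) ≠ 0 := by
    rintro h
    simp [h] at hneg
  have hc : killingForm ℝ g X₁ (θ X₁) < 0 := by linarith [hθpos X₁ hX₁0]
  have hd : 0 < α₁ H₁ := hH₁ H₁ ▸ killingForm_self_pos_of_mem hθpos haθ H₁.2 hH₁0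
  have hα₂H₁ : α₂ H₁ < 0 := by
    rwa [← hH₂, LieModule.traceForm_comm]
  have t := IsSl2Triple.of_lie_eq_smul (hX₁ H₁) (IsRootVector.map_involution hθinv haθ hX₁ H₁)
    (IsRootVector.lie_map_eq_smul hθinv hθpos haθ hmax hX₁ hH₁) hH₁0 hc.ne hd.ne'
  refine t.lie_e_ne_zero_of_lie_h_eq_smul_of_neg (μ := 2 / α₁ H₁ * α₂ H₁) hX₂0 ?_
    (mul_neg_of_pos_of_neg (by positivity) hα₂H₁)
  rw [smul_lie, hX₂ H₁, smul_smul]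

/-- Oshima–Sekiguchi's lemma.  Let `𝔤` be a real semisimple Lie algebra with Cartan
involution `θ` (an involutive automorphism for which `-B(X, θY)` is positive definite,
`B` the Killing form) and let `𝔞` be a maximal abelian subspace of `𝔭 = 𝔤^{-θ}`.
If `α₁, α₂` are restricted roots with `(α₁, α₂) < 0` (the inner product on `𝔞*`
computed via the Killing form through representatives `H₁, H₂ ∈ 𝔞`), then for any
nonzero `X₁ ∈ 𝔤(𝔞;α₁)` and nonzero `X₂ ∈ 𝔤(𝔞;α₂)` we have `[X₁, X₂] ≠ 0`. -/
theorem stmt4 {g : Type*} [LieRing g] [LieAlgebra ℝ g] [Module.Finite ℝ g]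
    [LieAlgebra.IsSemisimple ℝ g]
    (θ : g ≃ₗ⁅ℝ⁆ g) (hθinv : ∀ X, θ (θ X) = X)
    (hθpos : ∀ X : g, X ≠ 0 → 0 < -(killingForm ℝ g X (θ X)))
    (a : LieSubalgebra ℝ g)
    (haθ : ∀ X ∈ a, θ X = -X)
    (hab : ∀ X ∈ a, ∀ Y ∈ a, ⁅X, Y⁆ = 0)
    (hmax : ∀ X : g, θ X = -X → (∀ H ∈ a, ⁅H, X⁆ = (0 : g)) → X ∈ a)
    (α₁ α₂ : Module.Dual ℝ a) (hα₁ : α₁ ≠ 0) (hα₂ : α₂ ≠ 0)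
    (H₁ H₂ : a)
    (hH₁ : ∀ H : a, killingForm ℝ g (H₁ : g) (H : g) = α₁ H)
    (hH₂ : ∀ H : a, killingForm ℝ g (H₂ : g) (H : g) = α₂ H)
    (hneg : killingForm ℝ g (H₁ : g) (H₂ : g) < 0)
    (X₁ X₂ : g) (hX₁0 : X₁ ≠ 0) (hX₂0 : X₂ ≠ 0)
    (hX₁ : ∀ H : a, ⁅(H : g), X₁⁆ = α₁ H • X₁)
    (hX₂ : ∀ H : a, ⁅(H : g), X₂⁆ = α₂ H • X₂) :
    ⁅X₁, X₂⁆ ≠ 0 :=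
  stmt4_general θ hθinv hθpos a haθ hmax α₁ α₂ H₁ H₂ hH₁ hH₂ hneg X₁ X₂ hX₁0 hX₂0 hX₁ hX₂
end

section
/- For the group G = GL(n+1,ℝ) with Φ_k(x) = det((x_{ij})_{1≤i,j≤k}) the k-th leading principal minor, and w̃₀ the anti-diagonal permutation matrix, the function g ↦ Φ_k(w̃₀ g) satisfies: Φ_k(w̃₀ g d n) = d₁⋯d_k · Φ_k(w̃₀ g) for every diagonal matrix d = diag(d₁,…,d_{n+1}) and every upper-triangular unipotent matrix n, and Φ_k(w̃₀ d' n' g) = d'_{n−k+2}⋯d'_{n+1} · Φ_k(w̃₀ g) for every diagonal d' = diag(d'₁,…,d'_{n+1}) and upper-triangular unipotent n' with last row and column equal to those of the identity (i.e. d' ∈ M_H A_H, n' ∈ N_H for H = GL(n,ℝ) embedded in the upper-left corner). -/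
open Matrix

/-- The anti-diagonal permutation matrix `w̃₀` of size `n+1`. -/
def antiDiag (n : ℕ) : Matrix (Fin (n + 1)) (Fin (n + 1)) ℝ :=
  fun i j => if (i : ℕ) + (j : ℕ) = n then 1 else 0

/-- `Φ_k(x)`: the `k`-th leading principal minor of `x`. -/
noncomputable def Phi (n : ℕ) (k : ℕ) (hk : k ≤ n + 1)
    (x : Matrix (Fin (n + 1)) (Fin (n + 1)) ℝ) : ℝ :=
  (x.submatrix (Fin.castLE hk) (Fin.castLE hk)).det

/-- Upper-triangular unipotent matrices. -/
def IsUnipotentUpper {m : ℕ} (u : Matrix (Fin m) (Fin m) ℝ) : Prop :=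
  (∀ i, u i i = 1) ∧ ∀ i j : Fin m, j < i → u i j = 0

/-!
Right multiplication by an upper triangular matrix `T` acts on leading principal submatrices by
the leading block of `T` (the entries below that block's columns vanish), and dually for left
multiplication by a lower triangular matrix. Hence `Φ_k(x T) = Φ_k(x) T₁₁⋯T_kk`, which is the
first identity with `T = d n`. For the second, `w̃₀ T = (w̃₀ T w̃₀) w̃₀` and `w̃₀ T w̃₀` is lower
triangular with the diagonal of `T` reversed, so `Φ_k` picks up the last `k` entries of `d'`.
-/

namespace Matrix

variable {R : Type*} [CommRing R] {m k : ℕ}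

theorem IsUpperTriangular.submatrix_of_strictMono {ι : Type*} [LinearOrder ι]
    {T : Matrix (Fin m) (Fin m) R} (hT : T.IsUpperTriangular) {f : ι → Fin m}
    (hf : StrictMono f) : (T.submatrix f f).IsUpperTriangular :=
  fun _ _ hij => hT (hf hij)

theorem IsUpperTriangular.submatrix_rev {T : Matrix (Fin m) (Fin m) R}
    (hT : T.IsUpperTriangular) : (T.submatrix Fin.rev Fin.rev).IsLowerTriangular :=
  fun _ _ hij => hT (Fin.rev_lt_rev.2 hij)

theorem IsUpperTriangular.mul_submatrix_castLE {ι κ : Type*} {M : Matrix ι (Fin m) R}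
    {T : Matrix (Fin m) (Fin m) R} (hT : T.IsUpperTriangular) (h : k ≤ m) (f : κ → ι) :
    (M * T).submatrix f (Fin.castLE h) =
      M.submatrix f (Fin.castLE h) * T.submatrix (Fin.castLE h) (Fin.castLE h) := by
  ext i j
  refine (Fintype.sum_of_injective _ (Fin.castLE_injective h) _ _ ?_ fun _ => rfl).symm
  intro l hl
  refine mul_eq_zero_of_right _ (hT (Fin.lt_def.2 ?_))
  by_contra! hlk
  exact hl ⟨⟨l, by simp at hlk ⊢; omega⟩, rfl⟩

theorem IsLowerTriangular.mul_submatrix_castLE {ι κ : Type*} {L : Matrix (Fin m) (Fin m) R}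
    {M : Matrix (Fin m) ι R} (hL : L.IsLowerTriangular) (h : k ≤ m) (f : κ → ι) :
    (L * M).submatrix (Fin.castLE h) f =
      L.submatrix (Fin.castLE h) (Fin.castLE h) * M.submatrix (Fin.castLE h) f := by
  have hLt : Lᵀ.IsUpperTriangular := hL.transpose
  simpa [transpose_submatrix, transpose_mul] using
    congr_arg transpose (hLt.mul_submatrix_castLE (M := Mᵀ) h f)

theorem IsUpperTriangular.det_submatrix_castLE {T : Matrix (Fin m) (Fin m) R}
    (hT : T.IsUpperTriangular) (h : k ≤ m) :
    (T.submatrix (Fin.castLE h) (Fin.castLE h)).det =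
      ∏ i : Fin k, T (Fin.castLE h i) (Fin.castLE h i) :=
  det_of_isUpperTriangular (hT.submatrix_of_strictMono (Fin.strictMono_castLE h))

theorem IsLowerTriangular.det_submatrix_castLE {L : Matrix (Fin m) (Fin m) R}
    (hL : L.IsLowerTriangular) (h : k ≤ m) :
    (L.submatrix (Fin.castLE h) (Fin.castLE h)).det =
      ∏ i : Fin k, L (Fin.castLE h i) (Fin.castLE h i) := by
  rw [← det_transpose, transpose_submatrix]
  exact IsUpperTriangular.det_submatrix_castLE hL.transpose h

end Matrix

theorem Fin.prod_castLE {M : Type*} [CommMonoid M] {m k : ℕ} (h : k ≤ m) (f : Fin m → M) :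
    ∏ i : Fin k, f (Fin.castLE h i) =
      ∏ i ∈ Finset.univ.filter fun i : Fin m => (i : ℕ) < k, f i := by
  rw [Finset.prod_filter]
  refine Fintype.prod_of_injective _ (Fin.castLE_injective h) _ _ (fun l hl => if_neg ?_)
    fun i => (if_pos i.isLt).symm
  exact fun hlk => hl ⟨⟨l, hlk⟩, rfl⟩

theorem Fin.prod_rev_castLE {M : Type*} [CommMonoid M] {m k : ℕ} (h : k ≤ m) (f : Fin m → M) :
    ∏ i : Fin k, f (Fin.castLE h i).rev =
      ∏ i ∈ Finset.univ.filter fun i : Fin m => m - k ≤ (i : ℕ), f i := by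
  refine (Fin.prod_castLE h (f ∘ Fin.rev)).trans ?_
  refine Finset.prod_equiv Fin.revPerm (fun i => ?_) fun _ _ => rfl
  simp only [Finset.mem_filter, Finset.mem_univ, true_and, Fin.revPerm_apply, Fin.val_rev]
  omega

theorem IsUnipotentUpper.isUpperTriangular_diagonal_mul {m : ℕ} {u : Matrix (Fin m) (Fin m) ℝ}
    (hu : IsUnipotentUpper u) (d : Fin m → ℝ) : (diagonal d * u).IsUpperTriangular :=
  (blockTriangular_diagonal d).mul fun i j hij => hu.2 i j hij

theorem IsUnipotentUpper.diagonal_mul_apply_self {m : ℕ} {u : Matrix (Fin m) (Fin m) ℝ}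
    (hu : IsUnipotentUpper u) (d : Fin m → ℝ) (i : Fin m) : (diagonal d * u) i i = d i := by
  rw [diagonal_mul, hu.1 i, mul_one]

theorem antiDiag_eq_submatrix_one (n : ℕ) :
    antiDiag n = (1 : Matrix (Fin (n + 1)) (Fin (n + 1)) ℝ).submatrix Fin.rev id := by
  ext i j
  simp only [antiDiag, submatrix_apply, id, one_apply, Fin.ext_iff, Fin.val_rev]
  congr 1
  apply propext
  omega

theorem antiDiag_transpose (n : ℕ) : (antiDiag n)ᵀ = antiDiag n := by
  ext i j
  simp only [antiDiag, transpose_apply, add_comm]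

theorem antiDiag_mul {n : ℕ} (M : Matrix (Fin (n + 1)) (Fin (n + 1)) ℝ) :
    antiDiag n * M = M.submatrix Fin.rev id := by
  rw [antiDiag_eq_submatrix_one, ← submatrix_id_id M,
    ← submatrix_mul _ _ _ _ _ Function.bijective_id, Matrix.one_mul, submatrix_id_id]

theorem mul_antiDiag {n : ℕ} (M : Matrix (Fin (n + 1)) (Fin (n + 1)) ℝ) :
    M * antiDiag n = M.submatrix id Fin.rev := by
  rw [← transpose_transpose (M * _), transpose_mul, antiDiag_transpose, antiDiag_mul,
    transpose_submatrix, transpose_transpose]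

theorem antiDiag_mul_eq_submatrix_rev_mul {n : ℕ} (T : Matrix (Fin (n + 1)) (Fin (n + 1)) ℝ) :
    antiDiag n * T = T.submatrix Fin.rev Fin.rev * antiDiag n := by
  rw [antiDiag_mul, mul_antiDiag, submatrix_submatrix]
  simp only [Function.comp_def, Fin.rev_rev]
  rfl

section Phi

variable {n k : ℕ} (hk : k ≤ n + 1) (x : Matrix (Fin (n + 1)) (Fin (n + 1)) ℝ)

theorem Phi_mul_of_isUpperTriangular {T : Matrix (Fin (n + 1)) (Fin (n + 1)) ℝ}
    (hT : T.IsUpperTriangular) :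
    Phi n k hk (x * T) = Phi n k hk x * ∏ i : Fin k, T (Fin.castLE hk i) (Fin.castLE hk i) := by
  rw [Phi, hT.mul_submatrix_castLE, det_mul, hT.det_submatrix_castLE, Phi]

theorem Phi_mul_of_isLowerTriangular {L : Matrix (Fin (n + 1)) (Fin (n + 1)) ℝ}
    (hL : L.IsLowerTriangular) :
    Phi n k hk (L * x) = (∏ i : Fin k, L (Fin.castLE hk i) (Fin.castLE hk i)) * Phi n k hk x := by
  rw [Phi, hL.mul_submatrix_castLE, det_mul, hL.det_submatrix_castLE, Phi]

end Phi

theorem stmt11_general (n k : ℕ) (hk : k ≤ n + 1) :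
    (∀ (g : Matrix (Fin (n + 1)) (Fin (n + 1)) ℝ) (d : Fin (n + 1) → ℝ)
        (u : Matrix (Fin (n + 1)) (Fin (n + 1)) ℝ), IsUnipotentUpper u →
        Phi n k hk (antiDiag n * (g * Matrix.diagonal d * u)) =
          (∏ i ∈ Finset.univ.filter fun i : Fin (n + 1) => (i : ℕ) < k, d i) *
            Phi n k hk (antiDiag n * g)) ∧
    (∀ (g : Matrix (Fin (n + 1)) (Fin (n + 1)) ℝ) (d' : Fin (n + 1) → ℝ)
        (u' : Matrix (Fin (n + 1)) (Fin (n + 1)) ℝ), IsUnipotentUpper u' →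
        d' (Fin.last n) = 1 →
        (∀ i : Fin (n + 1), i ≠ Fin.last n → u' i (Fin.last n) = 0) →
        Phi n k hk (antiDiag n * (Matrix.diagonal d' * u' * g)) =
          (∏ i ∈ Finset.univ.filter fun i : Fin (n + 1) => n + 1 - k ≤ (i : ℕ), d' i) *
            Phi n k hk (antiDiag n * g)) := by
  constructor
  · intro g d u hu
    rw [Matrix.mul_assoc g, ← Matrix.mul_assoc,
      Phi_mul_of_isUpperTriangular hk _ (hu.isUpperTriangular_diagonal_mul d), mul_comm]
    simp only [hu.diagonal_mul_apply_self, Fin.prod_castLE]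
  · intro g d' u' hu' _ _
    rw [← Matrix.mul_assoc, antiDiag_mul_eq_submatrix_rev_mul, Matrix.mul_assoc,
      Phi_mul_of_isLowerTriangular hk _ (hu'.isUpperTriangular_diagonal_mul d').submatrix_rev]
    simp only [submatrix_apply, hu'.diagonal_mul_apply_self, Fin.prod_rev_castLE]

/-- Equivariance of `g ↦ Φ_k(w̃₀ g)` under right multiplication by the minimal parabolic
`P_G = M_G A_G N_G` of `G = GL(n+1,ℝ)` and left multiplication by `M_H A_H N_H ⊆ H = GL(n,ℝ)`
(embedded in the upper-left corner):
`Φ_k(w̃₀ g d n) = d₁⋯d_k Φ_k(w̃₀ g)` and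
`Φ_k(w̃₀ d' n' g) = d'_{n-k+2}⋯d'_{n+1} Φ_k(w̃₀ g)` (with `d'_{n+1} = 1`). -/
theorem stmt11 (n k : ℕ) (hk1 : 1 ≤ k) (hk : k ≤ n + 1) :
    (∀ (g : Matrix (Fin (n + 1)) (Fin (n + 1)) ℝ) (d : Fin (n + 1) → ℝ)
        (u : Matrix (Fin (n + 1)) (Fin (n + 1)) ℝ), IsUnipotentUpper u →
        Phi n k hk (antiDiag n * (g * Matrix.diagonal d * u)) =
          (∏ i ∈ Finset.univ.filter fun i : Fin (n + 1) => (i : ℕ) < k, d i) *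
            Phi n k hk (antiDiag n * g)) ∧
    (∀ (g : Matrix (Fin (n + 1)) (Fin (n + 1)) ℝ) (d' : Fin (n + 1) → ℝ)
        (u' : Matrix (Fin (n + 1)) (Fin (n + 1)) ℝ), IsUnipotentUpper u' →
        d' (Fin.last n) = 1 →
        (∀ i : Fin (n + 1), i ≠ Fin.last n → u' i (Fin.last n) = 0) →
        Phi n k hk (antiDiag n * (Matrix.diagonal d' * u' * g)) =
          (∏ i ∈ Finset.univ.filter fun i : Fin (n + 1) => n + 1 - k ≤ (i : ℕ), d' i) *
            Phi n k hk (antiDiag n * g)) :=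
  stmt11_general n k hk
end

section
/- For the group G = GL(n+1,ℝ) with Ψ_q(x) = det((x_{ij})_{2≤i≤q+1, 1≤j≤q}) and w̃₀ the anti-diagonal permutation matrix, the function g ↦ Ψ_q(w̃₀ g) satisfies: Ψ_q(w̃₀ g d n) = d₁⋯d_q · Ψ_q(w̃₀ g) for d = diag(d₁,…,d_{n+1}) diagonal and n upper-triangular unipotent in G, and Ψ_q(w̃₀ d' n' g) = d'_{n−q+1}⋯d'_n · Ψ_q(w̃₀ g) for d' = diag(d'₁,…,d'ₙ,1) and n' upper-triangular unipotent fixing the last basis vector. -/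
open Matrix

/-- `Ψ_q(x)`: the determinant of the `q × q` submatrix of `x` formed by
rows `2,…,q+1` and columns `1,…,q`. -/
noncomputable def Psi (n : ℕ) (q : ℕ) (hq : q ≤ n)
    (x : Matrix (Fin (n + 1)) (Fin (n + 1)) ℝ) : ℝ :=
  (x.submatrix (fun i : Fin q => (⟨(i : ℕ) + 1, by omega⟩ : Fin (n + 1)))
    (fun j : Fin q => (⟨(j : ℕ), by omega⟩ : Fin (n + 1)))).det

lemma antiDiag_mul_s12 {n : ℕ} (X : Matrix (Fin (n+1)) (Fin (n+1)) ℝ) (i j : Fin (n+1)) :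
    (antiDiag n * X) i j = X ⟨n - (i : ℕ), by omega⟩ j := by
  have hi : (i : ℕ) ≤ n := Nat.lt_succ_iff.mp i.isLt
  rw [Matrix.mul_apply, Finset.sum_eq_single (⟨n - (i : ℕ), by omega⟩ : Fin (n+1))]
  · have h : (i : ℕ) + (n - (i : ℕ)) = n := by omega
    simp [antiDiag, h]
  · intro b _ hb
    have hb' : ¬ ((i : ℕ) + (b : ℕ) = n) := by
      intro h
      apply hb
      apply Fin.ext
      show (b : ℕ) = n - (i : ℕ)
      omega
    simp [antiDiag, hb']
  · intro h; exact absurd (Finset.mem_univ _) h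

lemma sum_reduce1 {q m : ℕ} (hqm : q ≤ m) (f : Fin m → ℝ)
    (hf : ∀ k : Fin m, q ≤ (k : ℕ) → f k = 0) :
    ∑ k, f k = ∑ b : Fin q, f (Fin.castLE hqm b) := by
  have h2 : ∑ b : Fin q, f (Fin.castLE hqm b)
      = ∑ k ∈ Finset.univ.map (Fin.castLEEmb hqm), f k :=
    ((Finset.sum_map Finset.univ (Fin.castLEEmb hqm) f).trans
      (Finset.sum_congr rfl fun b _ => rfl)).symm
  rw [h2]
  symm
  apply Finset.sum_subset (Finset.subset_univ _)
  intro k _ hk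
  apply hf
  by_contra h
  push_neg at h
  exact hk (Finset.mem_map.mpr ⟨⟨(k : ℕ), h⟩, Finset.mem_univ _, Fin.ext rfl⟩)

lemma iota_lt {n q : ℕ} (hq : q ≤ n) (b : Fin q) : n - ((b : ℕ) + 1) < n + 1 := by omega

/-- The embedding `b ↦ n - (b+1)`. -/
def iotaEmb {n q : ℕ} (hq : q ≤ n) : Fin q ↪ Fin (n + 1) :=
  ⟨fun b => ⟨n - ((b : ℕ) + 1), iota_lt hq b⟩, by
    intro a b h
    have ha := a.isLt; have hb := b.isLt
    have hv := congrArg Fin.val h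
    simp only at hv
    exact Fin.ext (by omega)⟩

lemma sum_reduce2 {n q : ℕ} (hq : q ≤ n) (f : Fin (n+1) → ℝ)
    (hf : ∀ k : Fin (n+1), ((k : ℕ) < n - q ∨ (k : ℕ) = n) → f k = 0) :
    ∑ k, f k = ∑ b : Fin q, f ⟨n - ((b : ℕ) + 1), iota_lt hq b⟩ := by
  have h2 : ∑ b : Fin q, f ⟨n - ((b : ℕ) + 1), iota_lt hq b⟩
      = ∑ k ∈ Finset.univ.map (iotaEmb hq), f k :=
    ((Finset.sum_map Finset.univ (iotaEmb hq) f).trans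
      (Finset.sum_congr rfl fun b _ => rfl)).symm
  rw [h2]
  symm
  apply Finset.sum_subset (Finset.subset_univ _)
  intro k _ hk
  apply hf
  by_contra h
  push_neg at h
  obtain ⟨h1, h2⟩ := h
  have hk' := k.isLt
  refine hk (Finset.mem_map.mpr ⟨⟨n - 1 - (k : ℕ), by omega⟩, Finset.mem_univ _, ?_⟩)
  apply Fin.ext
  show n - (n - 1 - (k : ℕ) + 1) = (k : ℕ)
  omega

lemma prod_reduce1 {n q : ℕ} (hq : q ≤ n) (d : Fin (n+1) → ℝ) :
    (∏ i ∈ Finset.univ.filter fun i : Fin (n + 1) => (i : ℕ) < q, d i)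
      = ∏ b : Fin q, d (Fin.castLE (by omega) b) := by
  have h2 : ∏ b : Fin q, d (Fin.castLE (by omega : q ≤ n + 1) b)
      = ∏ k ∈ Finset.univ.map (Fin.castLEEmb (by omega : q ≤ n + 1)), d k :=
    ((Finset.prod_map Finset.univ (Fin.castLEEmb (by omega : q ≤ n + 1)) d).trans
      (Finset.prod_congr rfl fun b _ => rfl)).symm
  rw [h2]
  congr 1
  ext k
  simp only [Finset.mem_filter, Finset.mem_univ, true_and, Finset.mem_map,
    Fin.castLEEmb, Function.Embedding.coeFn_mk]
  constructor
  · intro hk; exact ⟨⟨(k : ℕ), hk⟩, Fin.ext rfl⟩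
  · rintro ⟨b, rfl⟩; exact b.isLt

lemma prod_reduce2 {n q : ℕ} (hq : q ≤ n) (d : Fin (n+1) → ℝ) :
    (∏ i ∈ Finset.univ.filter
        (fun i : Fin (n + 1) => n - q ≤ (i : ℕ) ∧ (i : ℕ) < n), d i)
      = ∏ b : Fin q, d ⟨n - ((b : ℕ) + 1), iota_lt hq b⟩ := by
  have h2 : ∏ b : Fin q, d ⟨n - ((b : ℕ) + 1), iota_lt hq b⟩
      = ∏ k ∈ Finset.univ.map (iotaEmb hq), d k :=
    ((Finset.prod_map Finset.univ (iotaEmb hq) d).trans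
      (Finset.prod_congr rfl fun b _ => rfl)).symm
  rw [h2]
  congr 1
  ext k
  simp only [Finset.mem_filter, Finset.mem_univ, true_and, Finset.mem_map,
    iotaEmb, Function.Embedding.coeFn_mk]
  constructor
  · rintro ⟨h1, h2⟩
    refine ⟨⟨n - 1 - (k : ℕ), by omega⟩, ?_⟩
    apply Fin.ext
    show n - (n - 1 - (k : ℕ) + 1) = (k : ℕ)
    omega
  · rintro ⟨b, rfl⟩
    have := b.isLt
    constructor
    · show n - q ≤ n - ((b : ℕ) + 1)
      omega
    · show n - ((b : ℕ) + 1) < n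
      omega

/-- Equivariance of `g ↦ Ψ_q(w̃₀ g)` for `G = GL(n+1,ℝ)`:
`Ψ_q(w̃₀ g d n) = d₁⋯d_q Ψ_q(w̃₀ g)` for `d` diagonal and `n` upper-triangular unipotent,
and `Ψ_q(w̃₀ d' n' g) = d'_{n-q+1}⋯d'_n Ψ_q(w̃₀ g)` for `d' = diag(d'₁,…,d'ₙ,1)` and
`n'` upper-triangular unipotent fixing the last basis vector. -/
theorem stmt12 (n q : ℕ) (hq1 : 1 ≤ q) (hq : q ≤ n) :
    (∀ (g : Matrix (Fin (n + 1)) (Fin (n + 1)) ℝ) (d : Fin (n + 1) → ℝ)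
        (u : Matrix (Fin (n + 1)) (Fin (n + 1)) ℝ), IsUnipotentUpper u →
        Psi n q hq (antiDiag n * (g * Matrix.diagonal d * u)) =
          (∏ i ∈ Finset.univ.filter fun i : Fin (n + 1) => (i : ℕ) < q, d i) *
            Psi n q hq (antiDiag n * g)) ∧
    (∀ (g : Matrix (Fin (n + 1)) (Fin (n + 1)) ℝ) (d' : Fin (n + 1) → ℝ)
        (u' : Matrix (Fin (n + 1)) (Fin (n + 1)) ℝ), IsUnipotentUpper u' →
        d' (Fin.last n) = 1 →
        (∀ i : Fin (n + 1), i ≠ Fin.last n → u' i (Fin.last n) = 0) →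
        Psi n q hq (antiDiag n * (Matrix.diagonal d' * u' * g)) =
          (∏ i ∈ Finset.univ.filter
              (fun i : Fin (n + 1) => n - q ≤ (i : ℕ) ∧ (i : ℕ) < n), d' i) *
            Psi n q hq (antiDiag n * g)) := by
  have hqn1 : q ≤ n + 1 := by omega
  set R : Fin q → Fin (n + 1) := fun i => ⟨(i : ℕ) + 1, by omega⟩ with hR
  set C : Fin q → Fin (n + 1) := fun j => ⟨(j : ℕ), by omega⟩ with hC
  have psieq : ∀ x : Matrix (Fin (n+1)) (Fin (n+1)) ℝ,
      Psi n q hq x = (x.submatrix R C).det := fun x => rfl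
  constructor
  · -- right equivariance
    intro g d u hu
    obtain ⟨hu1, hu2⟩ := hu
    set A := antiDiag n * g with hA
    set T : Matrix (Fin q) (Fin q) ℝ := fun b c => d (C b) * u (C b) (C c) with hT
    have hvanish : ∀ (a c : Fin q) (k : Fin (n + 1)), q ≤ (k : ℕ) →
        A (R a) k * (d k * u k (C c)) = 0 := by
      intro a c k hk
      have hz : u k (C c) = 0 := by
        apply hu2
        rw [Fin.lt_def]
        exact lt_of_lt_of_le c.isLt hk
      rw [hz, mul_zero, mul_zero]
    have lhs_eq : ∀ a c : Fin q, (A * Matrix.diagonal d * u) (R a) (C c)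
        = ∑ b : Fin q, A (R a) (C b) * T b c := by
      intro a c
      rw [Matrix.mul_apply]
      simp_rw [Matrix.mul_diagonal, mul_assoc]
      rw [sum_reduce1 hqn1 _ (hvanish a c)]
      apply Finset.sum_congr rfl
      intro b _
      rfl
    have key : (antiDiag n * (g * Matrix.diagonal d * u)).submatrix R C
        = (A.submatrix R C) * T := by
      have assoc : antiDiag n * (g * Matrix.diagonal d * u)
          = A * Matrix.diagonal d * u := by
        rw [hA, ← Matrix.mul_assoc, ← Matrix.mul_assoc]
      rw [assoc]
      ext a c
      rw [Matrix.submatrix_apply, lhs_eq a c, Matrix.mul_apply]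
      exact Finset.sum_congr rfl fun b _ => rfl
    have hdetT : T.det = ∏ b : Fin q, d (C b) := by
      rw [Matrix.det_of_upperTriangular]
      · apply Finset.prod_congr rfl
        intro b _
        show d (C b) * u (C b) (C b) = d (C b)
        rw [hu1, mul_one]
      · intro i j hij
        show d (C i) * u (C i) (C j) = 0
        have : u (C i) (C j) = 0 := by
          apply hu2
          rw [Fin.lt_def]
          exact hij
        rw [this, mul_zero]
    have hp : (∏ i ∈ Finset.univ.filter fun i : Fin (n + 1) => (i : ℕ) < q, d i)
        = ∏ b : Fin q, d (C b) :=
      (prod_reduce1 hq d).trans (Finset.prod_congr rfl fun b _ => rfl)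
    rw [psieq, psieq, key, Matrix.det_mul, hdetT, hp, mul_comm]
  · -- left equivariance
    intro g d' u' hu hd hlast
    obtain ⟨hu1, hu2⟩ := hu
    set ι : Fin q → Fin (n + 1) := fun b => ⟨n - ((b : ℕ) + 1), iota_lt hq b⟩ with hι
    set T : Matrix (Fin q) (Fin q) ℝ := fun a b => d' (ι a) * u' (ι a) (ι b) with hT
    have hrev : ∀ a : Fin q, (⟨n - ((R a : Fin (n+1)) : ℕ), by omega⟩ : Fin (n + 1)) = ι a := by
      intro a
      apply Fin.ext
      rfl
    have lhs_eq : ∀ a c : Fin q,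
        (antiDiag n * (Matrix.diagonal d' * u' * g)) (R a) (C c)
          = ∑ b : Fin q, T a b * g (ι b) (C c) := by
      intro a c
      rw [antiDiag_mul_s12, hrev a]
      rw [Matrix.mul_apply]
      simp_rw [Matrix.diagonal_mul]
      have hval : (ι a : ℕ) = n - ((a : ℕ) + 1) := rfl
      have ha := a.isLt
      have hvan : ∀ k : Fin (n + 1), ((k : ℕ) < n - q ∨ (k : ℕ) = n) →
          d' (ι a) * u' (ι a) k * g k (C c) = 0 := by
        intro k hk
        rcases hk with hk | hk
        · have hz : u' (ι a) k = 0 := by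
            apply hu2
            rw [Fin.lt_def, hval]
            omega
          rw [hz, mul_zero, zero_mul]
        · have hkl : k = Fin.last n := Fin.ext hk
          have hz : u' (ι a) (Fin.last n) = 0 := by
            apply hlast
            intro hcon
            have hv := congrArg Fin.val hcon
            rw [hval] at hv
            simp only [Fin.val_last] at hv
            omega
          rw [hkl, hz, mul_zero, zero_mul]
      rw [sum_reduce2 hq (fun k => d' (ι a) * u' (ι a) k * g k (C c)) hvan]
    have grew : ∀ (b c : Fin q), g (ι b) (C c) = (antiDiag n * g) (R b) (C c) := by
      intro b c
      rw [antiDiag_mul_s12, hrev b]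
    have key : (antiDiag n * (Matrix.diagonal d' * u' * g)).submatrix R C
        = T * ((antiDiag n * g).submatrix R C) := by
      ext a c
      rw [Matrix.submatrix_apply, lhs_eq a c, Matrix.mul_apply]
      apply Finset.sum_congr rfl
      intro b _
      rw [Matrix.submatrix_apply, grew]
    have hdetT : T.det = ∏ b : Fin q, d' (ι b) := by
      rw [Matrix.det_of_lowerTriangular]
      · apply Finset.prod_congr rfl
        intro b _
        show d' (ι b) * u' (ι b) (ι b) = d' (ι b)
        rw [hu1, mul_one]
      · intro i j hij
        have hij' : (i : ℕ) < (j : ℕ) := hij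
        show d' (ι i) * u' (ι i) (ι j) = 0
        have hz : u' (ι i) (ι j) = 0 := by
          apply hu2
          rw [Fin.lt_def]
          show n - ((j : ℕ) + 1) < n - ((i : ℕ) + 1)
          have hj := j.isLt
          omega
        rw [hz, mul_zero]
    have hp : (∏ i ∈ Finset.univ.filter
          (fun i : Fin (n + 1) => n - q ≤ (i : ℕ) ∧ (i : ℕ) < n), d' i)
        = ∏ b : Fin q, d' (ι b) :=
      (prod_reduce2 hq d').trans (Finset.prod_congr rfl fun b _ => rfl)
    rw [psieq, psieq, key, Matrix.det_mul, hdetT, hp]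
end

section
/- Let k₁,…,k_{n+1} ∈ ℤ and ℓ₁,…,ℓₙ ∈ ℤ be given. Then there exist integers λ'₁ ≥ … ≥ λ'_{n+1}, λ''₁ ≥ … ≥ λ''_{n+1}, ν'₁ ≥ … ≥ ν'ₙ and ν''₁ ≥ … ≥ ν''ₙ satisfying the double interlacing conditions λ'₁ ≥ ν'₁ ≥ λ'₂ ≥ … ≥ λ'ₙ ≥ ν'ₙ ≥ λ'_{n+1} and λ''₁ ≥ ν''₁ ≥ λ''₂ ≥ … ≥ λ''ₙ ≥ ν''ₙ ≥ λ''_{n+1}, together with λ'ᵢ − λ''ᵢ = kᵢ for all 1 ≤ i ≤ n+1 and ν'ⱼ − ν''ⱼ = ℓⱼ for all 1 ≤ j ≤ n. -/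
/-- Combinatorial core of the translation principle for `(GL(n+1,ℂ), GL(n,ℂ))`:
given arbitrary integers `k₁,…,k_{n+1}` and `ℓ₁,…,ℓₙ`, there exist decreasing
integer sequences `λ'`, `λ''` (of length `n+1`) and `ν'`, `ν''` (of length `n`)
satisfying the double interlacing conditions
`λ'₁ ≥ ν'₁ ≥ λ'₂ ≥ … ≥ λ'ₙ ≥ ν'ₙ ≥ λ'_{n+1}` and likewise for `λ''`, `ν''`,
together with `λ'ᵢ − λ''ᵢ = kᵢ` and `ν'ⱼ − ν''ⱼ = ℓⱼ`. -/
theorem stmt15 (n : ℕ) (k : Fin (n + 1) → ℤ) (l : Fin n → ℤ) :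
    ∃ (lam' lam'' : Fin (n + 1) → ℤ) (nu' nu'' : Fin n → ℤ),
      Antitone lam' ∧ Antitone lam'' ∧ Antitone nu' ∧ Antitone nu'' ∧
      (∀ i : Fin n, lam' i.succ ≤ nu' i ∧ nu' i ≤ lam' i.castSucc) ∧
      (∀ i : Fin n, lam'' i.succ ≤ nu'' i ∧ nu'' i ≤ lam'' i.castSucc) ∧
      (∀ i : Fin (n + 1), lam' i - lam'' i = k i) ∧
      (∀ j : Fin n, nu' j - nu'' j = l j) := by
  set B : ℤ := 1 + (∑ i, |k i|) + (∑ j, |l j|) with hBdef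
  have hB : 1 ≤ B := by
    have h1 : 0 ≤ ∑ i, |k i| := Finset.sum_nonneg fun i _ => abs_nonneg _
    have h2 : 0 ≤ ∑ j, |l j| := Finset.sum_nonneg fun j _ => abs_nonneg _
    omega
  have hk : ∀ i, |k i| ≤ B := by
    intro i
    have := Finset.single_le_sum (f := fun i => |k i|) (fun i _ => abs_nonneg _)
      (Finset.mem_univ i)
    have h2 : 0 ≤ ∑ j, |l j| := Finset.sum_nonneg fun j _ => abs_nonneg _
    omega
  have hl : ∀ j, |l j| ≤ B := by
    intro j
    have := Finset.single_le_sum (f := fun j => |l j|) (fun j _ => abs_nonneg _)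
      (Finset.mem_univ j)
    have h1 : 0 ≤ ∑ i, |k i| := Finset.sum_nonneg fun i _ => abs_nonneg _
    omega
  have hk' : ∀ i, -B ≤ k i ∧ k i ≤ B := fun i => abs_le.mp (hk i)
  have hl' : ∀ j, -B ≤ l j ∧ l j ≤ B := fun j => abs_le.mp (hl j)
  refine ⟨fun i => -4 * B * (i : ℤ) + k i, fun i => -4 * B * (i : ℤ),
    fun j => -4 * B * (j : ℤ) - 2 * B + l j, fun j => -4 * B * (j : ℤ) - 2 * B,
    ?_, ?_, ?_, ?_, ?_, ?_, ?_, ?_⟩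
  · rw [Fin.antitone_iff_succ_le]
    intro i
    have h1 := hk' i.succ
    have h2 := hk' i.castSucc
    simp only [Fin.val_succ, Fin.coe_castSucc]
    push_cast
    nlinarith [h1.1, h1.2, h2.1, h2.2]
  · rw [Fin.antitone_iff_succ_le]
    intro i
    simp only [Fin.val_succ, Fin.coe_castSucc]
    push_cast
    nlinarith
  · intro a b hab
    rcases eq_or_lt_of_le hab with h | h
    · simp [h]
    · have hv : (a : ℤ) + 1 ≤ (b : ℤ) := by exact_mod_cast h
      have h1 := hl' a
      have h2 := hl' b
      simp only
      nlinarith [h1.1, h1.2, h2.1, h2.2]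
  · intro a b hab
    rcases eq_or_lt_of_le hab with h | h
    · simp [h]
    · have hv : (a : ℤ) + 1 ≤ (b : ℤ) := by exact_mod_cast h
      simp only
      nlinarith
  · intro i
    have h1 := hk' i.succ
    have h2 := hk' i.castSucc
    have h3 := hl' i
    constructor <;>
      · simp only [Fin.val_succ, Fin.coe_castSucc]
        push_cast
        nlinarith [h1.1, h1.2, h2.1, h2.2, h3.1, h3.2]
  · intro i
    constructor <;>
      · simp only [Fin.val_succ, Fin.coe_castSucc]
        push_cast
        nlinarith
  · intro i; ring
  · intro j; ring
end
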